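/- arXiv:1212.0614 — 2 statements merged into one kernel-verified Lean document; each statement's English description precedes it below -/
import Mathlib

section
/- Let F be a distribution function on [0,∞) whose survival function satisfies 1 - F(x) ~ c·x^{2N-2ξ}·exp{-β x^{2ξ}} as x → ∞ for constants c, β, ξ, N > 0. Then for any b > 1, lim_{r→∞} log(1 - F(b r)) / log(1 - F(r)) = b^{2ξ}. -/
open Filter Topology Real

lemma kotz_key (F : ℝ → ℝ) (c β ξ N : ℝ)
    (hc : 0 < c) (hβ : 0 < β) (hξ : 0 < ξ)
    (hF : Tendsto
      (fun x : ℝ => (1 - F x) / (c * x ^ (2 * N - 2 * ξ) * Real.exp (-β * x ^ (2 * ξ))))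
      atTop (𝓝 1)) :
    Tendsto (fun x : ℝ => Real.log (1 - F x) / x ^ (2 * ξ)) atTop (𝓝 (-β)) := by
  set g : ℝ → ℝ := fun x => (1 - F x) / (c * x ^ (2 * N - 2 * ξ) * Real.exp (-β * x ^ (2 * ξ)))
    with hg
  have hq : (0:ℝ) < 2 * ξ := by linarith
  have hgpos : ∀ᶠ x in atTop, 0 < g x := hF.eventually (eventually_gt_nhds one_pos)
  have hxpos : ∀ᶠ x in atTop, (0:ℝ) < x := eventually_gt_atTop 0
  -- eventual equality
  have heq : ∀ᶠ x in atTop,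
      Real.log (1 - F x) / x ^ (2 * ξ)
        = Real.log (g x) * (x ^ (2 * ξ))⁻¹ + Real.log c * (x ^ (2 * ξ))⁻¹
          + (2 * N - 2 * ξ) * (Real.log x / x ^ (2 * ξ)) - β := by
    filter_upwards [hgpos, hxpos] with x hgx hx
    have hxq : (0:ℝ) < x ^ (2 * ξ) := Real.rpow_pos_of_pos hx _
    have hxp : (0:ℝ) < x ^ (2 * N - 2 * ξ) := Real.rpow_pos_of_pos hx _
    have hD : (0:ℝ) < c * x ^ (2 * N - 2 * ξ) * Real.exp (-β * x ^ (2 * ξ)) := by positivity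
    have h1 : 1 - F x = g x * (c * x ^ (2 * N - 2 * ξ) * Real.exp (-β * x ^ (2 * ξ))) := by
      rw [hg]; field_simp
    rw [h1, Real.log_mul (ne_of_gt hgx) (ne_of_gt hD),
      Real.log_mul (by positivity) (Real.exp_ne_zero _),
      Real.log_mul (ne_of_gt hc) (ne_of_gt hxp), Real.log_exp,
      Real.log_rpow hx]
    field_simp
    ring
  refine Tendsto.congr' (heq.mono fun x h => h.symm) ?_
  have hxq : Tendsto (fun x : ℝ => x ^ (2 * ξ)) atTop atTop := tendsto_rpow_atTop hq
  have hinv : Tendsto (fun x : ℝ => (x ^ (2 * ξ))⁻¹) atTop (𝓝 0) := hxq.inv_tendsto_atTop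
  have hlogg : Tendsto (fun x => Real.log (g x)) atTop (𝓝 0) := by
    have := hF.log one_ne_zero
    simpa using this
  have hlogdiv : Tendsto (fun x : ℝ => Real.log x / x ^ (2 * ξ)) atTop (𝓝 0) :=
    (isLittleO_log_rpow_atTop hq).tendsto_div_nhds_zero
  have := (((hlogg.mul hinv).add (hinv.const_mul (Real.log c))).add
      (hlogdiv.const_mul (2 * N - 2 * ξ))).sub_const β
  simpa using this

/-- if `1 - F(x) ~ c x^{2N-2ξ} exp(-β x^{2ξ})` as `x → ∞` with
`c, β, ξ, N > 0`, then for any `b > 1`,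
`log(1 - F(b r)) / log(1 - F(r)) → b^{2ξ}` as `r → ∞`. -/
theorem kotz_tail_order (F : ℝ → ℝ) (c β ξ N : ℝ)
    (hc : 0 < c) (hβ : 0 < β) (hξ : 0 < ξ) (hN : 0 < N)
    (hF : Tendsto
      (fun x : ℝ => (1 - F x) / (c * x ^ (2 * N - 2 * ξ) * Real.exp (-β * x ^ (2 * ξ))))
      atTop (𝓝 1))
    (b : ℝ) (hb : 1 < b) :
    Tendsto (fun r : ℝ => Real.log (1 - F (b * r)) / Real.log (1 - F r))
      atTop (𝓝 (b ^ (2 * ξ))) := by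
  have hb0 : (0:ℝ) < b := by linarith
  have key := kotz_key F c β ξ N hc hβ hξ hF
  have hbr : Tendsto (fun r : ℝ => b * r) atTop atTop :=
    Tendsto.const_mul_atTop hb0 tendsto_id
  have h1 : Tendsto (fun r : ℝ => Real.log (1 - F (b * r)) / (b * r) ^ (2 * ξ)) atTop
      (𝓝 (-β)) := key.comp hbr
  -- eventually denominator nonzero
  have hne : ∀ᶠ r in atTop, Real.log (1 - F r) / r ^ (2 * ξ) ≠ 0 := by
    have : ∀ᶠ y in 𝓝 (-β), y ≠ 0 := by
      exact eventually_ne_nhds (by linarith)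
    exact key.eventually this
  have heq : ∀ᶠ r in atTop,
      (Real.log (1 - F (b * r)) / (b * r) ^ (2 * ξ)) * b ^ (2 * ξ)
          / (Real.log (1 - F r) / r ^ (2 * ξ))
        = Real.log (1 - F (b * r)) / Real.log (1 - F r) := by
    filter_upwards [hne, eventually_gt_atTop 0] with r hner hr
    have hrq : (0:ℝ) < r ^ (2 * ξ) := Real.rpow_pos_of_pos hr _
    have hB : Real.log (1 - F r) ≠ 0 := by
      intro h; apply hner; rw [h]; simp
    have hmul : (b * r) ^ (2 * ξ) = b ^ (2 * ξ) * r ^ (2 * ξ) :=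
      Real.mul_rpow (le_of_lt hb0) (le_of_lt hr)
    have hbq : (0:ℝ) < b ^ (2 * ξ) := Real.rpow_pos_of_pos hb0 _
    rw [hmul]
    field_simp
  refine Tendsto.congr' heq ?_
  have hmul : Tendsto (fun r : ℝ => (Real.log (1 - F (b * r)) / (b * r) ^ (2 * ξ)) * b ^ (2 * ξ))
      atTop (𝓝 ((-β) * b ^ (2 * ξ))) := h1.mul_const _
  have hdiv := hmul.div key (by intro h; rw [neg_eq_zero] at h; exact absurd h (ne_of_gt hβ))
  have h2 : -β * b ^ (2 * ξ) / -β = b ^ (2 * ξ) := by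
    field_simp
  rw [h2] at hdiv
  exact hdiv
end

section
/- Let ψ be the Laplace transform of a positive random variable, and define the Archimedean copula C_ψ(u_1,...,u_d) = ψ(ψ^{-1}(u_1) + ... + ψ^{-1}(u_d)). Suppose as s → ∞, ψ(s) ~ a_1 s^q exp{-a_2 s^{1-β}} with a_1, a_2 > 0, 0 < β < 1, and ψ'(s) ~ T'(s) where T(s) = a_1 s^q exp{-a_2 s^{1-β}}. Then lim_{u→0+} log C_ψ(u,...,u)/log u = d^{1-β}; i.e., the lower tail order of C_ψ is d^{1-β}, strictly between 1 and d. -/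
/-!
As `s → ∞` the hypothesis `ψ(s) ~ a₁ s^q exp(-a₂ s^{1-β})` gives `log ψ(s) ~ -a₂ s^{1-β}`,
the power and the constant only contributing `o(s^{1-β})`. Since `log u = log ψ(ψ⁻¹ u)` and
`ψ⁻¹(u) → ∞` as `u → 0+`,
`log ψ(d ψ⁻¹ u) / log u ~ (d ψ⁻¹ u)^{1-β} / (ψ⁻¹ u)^{1-β} = d^{1-β}`.
-/

open Filter Topology Real MeasureTheory

theorem tendsto_log_div_of_tendsto_div_one {α : Type*} {l : Filter α} {f g h : α → ℝ}
    {c : ℝ} (hfg : Tendsto (fun x => f x / g x) l (𝓝 1)) (hh : Tendsto h l atTop)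
    (hg : Tendsto (fun x => log (g x) / h x) l (𝓝 c)) :
    Tendsto (fun x => log (f x) / h x) l (𝓝 c) := by
  have hlog : Tendsto (fun x => log (f x / g x) / h x) l (𝓝 0) := by
    have := ((continuousAt_log one_ne_zero).tendsto.comp hfg).div_atTop hh
    simpa only [Function.comp_def, log_one] using this
  have hsplit : (fun x => log (f x / g x) / h x + log (g x) / h x)
      =ᶠ[l] fun x => log (f x) / h x := by
    filter_upwards [hfg.eventually_ne one_ne_zero] with x hx
    have hf : f x ≠ 0 := fun h0 => hx (by simp [h0])
    have hg : g x ≠ 0 := fun h0 => hx (by simp [h0])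
    rw [log_div hf hg, ← add_div, sub_add_cancel]
  simpa only [zero_add] using (hlog.add hg).congr' hsplit

theorem tendsto_log_mul_rpow_mul_exp_div_rpow (a₁ a₂ q : ℝ) {r : ℝ} (ha₁ : 0 < a₁)
    (hr : 0 < r) :
    Tendsto (fun s : ℝ => log (a₁ * s ^ q * exp (-a₂ * s ^ r)) / s ^ r) atTop (𝓝 (-a₂)) := by
  have hconst : Tendsto (fun s : ℝ => log a₁ / s ^ r) atTop (𝓝 0) :=
    tendsto_const_nhds.div_atTop (tendsto_rpow_atTop hr)
  have hpow : Tendsto (fun s : ℝ => q * (log s / s ^ r)) atTop (𝓝 0) := by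
    simpa only [mul_zero] using
      ((isLittleO_log_rpow_atTop hr).tendsto_div_nhds_zero).const_mul q
  have hsum := (hconst.add hpow).add_const (-a₂)
  rw [zero_add, zero_add] at hsum
  refine hsum.congr' ?_
  filter_upwards [eventually_gt_atTop 0] with s hs
  have hsq : 0 < s ^ q := rpow_pos_of_pos hs q
  rw [log_mul (by positivity) (exp_pos _).ne', log_mul ha₁.ne' hsq.ne', log_rpow hs, log_exp]
  field_simp

theorem tendsto_atTop_of_leftInverse_of_antitoneOn {ψ φ : ℝ → ℝ}
    (hψ_anti : AntitoneOn ψ (Set.Ici 0)) (hψ_pos : ∀ᶠ s in atTop, 0 < ψ s)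
    (hφ : ∀ᶠ u in 𝓝[>] (0 : ℝ), 0 ≤ φ u ∧ ψ (φ u) = u) :
    Tendsto φ (𝓝[>] 0) atTop := by
  refine tendsto_atTop.2 fun M => ?_
  obtain ⟨s₀, hs₀_pos, hs₀_ge⟩ := (hψ_pos.and (eventually_ge_atTop (max M 0))).exists
  filter_upwards [hφ, Ioo_mem_nhdsGT hs₀_pos] with u ⟨hφu_nonneg, hψφu⟩ hu
  by_contra! hlt
  have hle : ψ s₀ ≤ ψ (φ u) :=
    hψ_anti hφu_nonneg (le_trans (le_max_right M 0) hs₀_ge)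
      (hlt.le.trans (le_trans (le_max_left M 0) hs₀_ge))
  rw [hψφu] at hle
  exact hu.2.not_ge hle

theorem tendsto_log_comp_mul_div_log {α : Type*} {l : Filter α} {ψ : ℝ → ℝ} {φ u : α → ℝ}
    {r c d : ℝ} (hc : c ≠ 0) (hd : 0 < d)
    (hψ : Tendsto (fun s => log (ψ s) / s ^ r) atTop (𝓝 c)) (hφ : Tendsto φ l atTop)
    (hψφ : ∀ᶠ x in l, ψ (φ x) = u x) :
    Tendsto (fun x => log (ψ (d * φ x)) / log (u x)) l (𝓝 (d ^ r)) := by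
  have hratio := ((hψ.comp (hφ.const_mul_atTop hd)).div (hψ.comp hφ) hc).mul_const (d ^ r)
  rw [div_self hc, one_mul] at hratio
  refine hratio.congr' ?_
  filter_upwards [hψφ, hφ.eventually_gt_atTop 0] with x hx hφx
  simp only [Pi.div_apply, Function.comp_apply, mul_rpow hd.le hφx.le, hx]
  field_simp

theorem archimedean_lower_intermediate_tail_general {d : ℕ} (hd : 2 ≤ d)
    (ψ φ : ℝ → ℝ)
    (hψ_anti : StrictAntiOn ψ (Set.Ici 0))
    (hφ : ∀ u : ℝ, u ∈ Set.Ioc (0:ℝ) 1 → 0 ≤ φ u ∧ ψ (φ u) = u)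
    (a₁ a₂ q β : ℝ) (ha₁ : 0 < a₁) (ha₂ : 0 < a₂) (hβ : 0 < β ∧ β < 1)
    (hψ_sim : Tendsto
      (fun s : ℝ => ψ s / (a₁ * s ^ q * Real.exp (-a₂ * s ^ (1 - β)))) atTop (𝓝 1)) :
    Tendsto (fun u : ℝ => Real.log (ψ ((d : ℝ) * φ u)) / Real.log u)
      (𝓝[>] (0:ℝ)) (𝓝 ((d : ℝ) ^ (1 - β))) ∧
    1 < (d : ℝ) ^ (1 - β) ∧ (d : ℝ) ^ (1 - β) < d := by
  have hr : 0 < 1 - β := sub_pos.2 hβ.2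
  have hd1 : (1 : ℝ) < d := by exact_mod_cast hd
  have hlogψ : Tendsto (fun s => log (ψ s) / s ^ (1 - β)) atTop (𝓝 (-a₂)) :=
    tendsto_log_div_of_tendsto_div_one hψ_sim (tendsto_rpow_atTop hr)
      (tendsto_log_mul_rpow_mul_exp_div_rpow a₁ a₂ q ha₁ hr)
  have hψ_pos : ∀ᶠ s in atTop, 0 < ψ s := by
    filter_upwards [hψ_sim.eventually (eventually_gt_nhds one_pos), eventually_gt_atTop 0]
      with s hs hs_pos
    have hsq : 0 < s ^ q := rpow_pos_of_pos hs_pos q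
    exact (div_pos_iff_of_pos_right (by positivity)).1 hs
  have hφ_near : ∀ᶠ u in 𝓝[>] (0 : ℝ), 0 ≤ φ u ∧ ψ (φ u) = u :=
    eventually_of_mem (Ioc_mem_nhdsGT one_pos) hφ
  have hφ_top := tendsto_atTop_of_leftInverse_of_antitoneOn hψ_anti.antitoneOn hψ_pos hφ_near
  refine ⟨tendsto_log_comp_mul_div_log (neg_ne_zero.2 ha₂.ne') (by positivity) hlogψ hφ_top
      (hφ_near.mono fun u hu => hu.2), one_lt_rpow hd1 hr, ?_⟩
  simpa only [rpow_one] using rpow_lt_rpow_of_exponent_lt hd1 (sub_lt_self 1 hβ.1)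

/-- if the Archimedean generator `ψ` (a Laplace transform of a positive
random variable) satisfies `ψ(s) ~ a₁ s^q exp(-a₂ s^{1-β})` and `ψ'(s) ~ T'(s)` as
`s → ∞`, with `0 < β < 1`, then the lower tail order of the Archimedean copula
`C_ψ(u1_d) = ψ(d ψ⁻¹(u))` is `d^{1-β}`, strictly between `1` and `d`. -/
theorem archimedean_lower_intermediate_tail {d : ℕ} (hd : 2 ≤ d)
    (ψ φ : ℝ → ℝ) (μ : Measure ℝ) [IsProbabilityMeasure μ]
    (hμ : μ (Set.Iic 0) = 0)
    (hψLT : ∀ s : ℝ, 0 ≤ s → ψ s = ∫ x, Real.exp (-s * x) ∂μ)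
    (hψ_anti : StrictAntiOn ψ (Set.Ici 0)) (hψ0 : ψ 0 = 1)
    (hψ_top : Tendsto ψ atTop (𝓝 0))
    (hφ : ∀ u : ℝ, u ∈ Set.Ioc (0:ℝ) 1 → 0 ≤ φ u ∧ ψ (φ u) = u)
    (a₁ a₂ q β : ℝ) (ha₁ : 0 < a₁) (ha₂ : 0 < a₂) (hβ : 0 < β ∧ β < 1)
    (hψ_sim : Tendsto
      (fun s : ℝ => ψ s / (a₁ * s ^ q * Real.exp (-a₂ * s ^ (1 - β)))) atTop (𝓝 1))
    (hψ'_sim : Tendsto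
      (fun s : ℝ => deriv ψ s /
        deriv (fun x : ℝ => a₁ * x ^ q * Real.exp (-a₂ * x ^ (1 - β))) s) atTop (𝓝 1)) :
    Tendsto (fun u : ℝ => Real.log (ψ ((d : ℝ) * φ u)) / Real.log u)
      (𝓝[>] (0:ℝ)) (𝓝 ((d : ℝ) ^ (1 - β))) ∧
    1 < (d : ℝ) ^ (1 - β) ∧ (d : ℝ) ^ (1 - β) < d :=
  archimedean_lower_intermediate_tail_general hd ψ φ hψ_anti hφ a₁ a₂ q β ha₁ ha₂ hβ hψ_sim
end
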